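/- Let b : ℝ → ℝ be bounded, measurable and Lebesgue integrable, define φ(x) = ∫_0^x exp(−2 ∫_0^y b(z) dz) dy and φ'(x) = exp(−2 ∫_0^x b(z) dz), and let a : ℝ → ℝ be bounded and twice continuously differentiable with bounded first and second derivatives. Then the maps φ' ∘ φ⁻¹ : ℝ → ℝ and (φ'·a) ∘ φ⁻¹ : ℝ → ℝ are globally Lipschitz continuous, where φ⁻¹ denotes the inverse of the bijection φ. -/

import Mathlib

/-!
Because `b ∈ L¹`, the exponent `-2 ∫₀ˣ b` stays in `[-2‖b‖₁, 2‖b‖₁]`, so `φ'` is pinched between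
two positive constants; as `b` is bounded the exponent is Lipschitz, hence so is `φ'`, and so is
`φ' a` as a product of bounded Lipschitz functions. The lower bound `φ' ≥ exp (-2‖b‖₁)` makes `φ`
grow at least linearly, so `φ` is a continuous surjective antilipschitz map and `φ⁻¹` is Lipschitz.
-/

open MeasureTheory intervalIntegral

noncomputable section

/-- `φ'(x) = exp(−2 ∫_0^x b(z) dz)`. -/
def phi' (b : ℝ → ℝ) (x : ℝ) : ℝ := Real.exp (-2 * ∫ z in (0:ℝ)..x, b z)

/-- `φ(x) = ∫_0^x exp(−2 ∫_0^y b(z) dz) dy`. -/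
def phi (b : ℝ → ℝ) (x : ℝ) : ℝ := ∫ y in (0:ℝ)..x, phi' b y

open Set
open scoped NNReal

lemma LipschitzWith.mul_of_norm_le {α R : Type*} [PseudoMetricSpace α] [NonUnitalSeminormedRing R]
    {f g : α → R} {Kf Kg Mf Mg : ℝ≥0} (hf : LipschitzWith Kf f) (hg : LipschitzWith Kg g)
    (hMf : ∀ x, ‖f x‖ ≤ Mf) (hMg : ∀ x, ‖g x‖ ≤ Mg) :
    LipschitzWith (Mf * Kg + Mg * Kf) (fun x => f x * g x) := by
  refine LipschitzWith.of_dist_le_mul fun x y => ?_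
  have hsplit : f x * g x - f y * g y = f x * (g x - g y) + (f x - f y) * g y := by noncomm_ring
  calc dist (f x * g x) (f y * g y)
      ≤ ‖f x‖ * ‖g x - g y‖ + ‖f x - f y‖ * ‖g y‖ := by
        rw [dist_eq_norm, hsplit]
        exact (norm_add_le _ _).trans (add_le_add (norm_mul_le _ _) (norm_mul_le _ _))
    _ ≤ Mf * (Kg * dist x y) + (Kf * dist x y) * Mg := by
        rw [← dist_eq_norm, ← dist_eq_norm]
        gcongr
        exacts [hMf x, hg.dist_le_mul x y, hf.dist_le_mul x y, hMg y]
    _ = ↑(Mf * Kg + Mg * Kf) * dist x y := by push_cast; ring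

lemma Real.lipschitzOnWith_exp_Iic (K : ℝ) :
    LipschitzOnWith (Real.exp K).toNNReal Real.exp (Iic K) :=
  (convex_Iic K).lipschitzOnWith_of_nnnorm_deriv_le
    (fun x _ => Real.differentiableAt_exp) fun x hx => by
      rw [Real.deriv_exp, ← NNReal.coe_le_coe, coe_nnnorm, Real.norm_of_nonneg (Real.exp_pos x).le,
        Real.coe_toNNReal _ (Real.exp_pos K).le]
      exact Real.exp_le_exp.2 hx

lemma lipschitzWith_primitive {E : Type*} [NormedAddCommGroup E] [NormedSpace ℝ E]
    {f : ℝ → E} {C : ℝ≥0} (hf : ∀ u v, IntervalIntegrable f volume u v) (hC : ∀ x, ‖f x‖ ≤ C)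
    (a : ℝ) : LipschitzWith C (fun x => ∫ t in a..x, f t) :=
  LipschitzWith.of_dist_le_mul fun x y => by
    rw [dist_eq_norm, integral_interval_sub_left (hf a x) (hf a y), Real.dist_eq]
    exact norm_integral_le_of_norm_le_const fun t _ => hC t

lemma abs_intervalIntegral_le_integral_abs {f : ℝ → ℝ} (hf : Integrable f) (a b : ℝ) :
    |∫ t in a..b, f t| ≤ ∫ t, |f t| :=
  (norm_integral_le_integral_norm_uIoc (f := f)).trans <|
    setIntegral_le_integral hf.norm (.of_forall fun _ => norm_nonneg _)

lemma antilipschitzWith_of_mul_sub_le {f : ℝ → ℝ} {c : ℝ≥0} (hc : 0 < c)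
    (hf : ∀ x y, x ≤ y → c * (y - x) ≤ f y - f x) : AntilipschitzWith c⁻¹ f := by
  refine AntilipschitzWith.of_le_mul_dist fun x y => ?_
  wlog hxy : x ≤ y generalizing x y
  · rw [dist_comm, dist_comm (f x)]; exact this y x (le_of_not_ge hxy)
  have hc' : (0 : ℝ) < c := hc
  rw [Real.dist_eq, Real.dist_eq, abs_sub_comm, abs_of_nonneg (sub_nonneg.2 hxy), abs_sub_comm,
    abs_of_nonneg ((mul_nonneg hc'.le (sub_nonneg.2 hxy)).trans (hf x y hxy)), NNReal.coe_inv,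
    le_inv_mul_iff₀ hc']
  exact hf x y hxy

lemma surjective_of_mul_sub_le {f : ℝ → ℝ} (hcont : Continuous f) {c : ℝ} (hc : 0 < c)
    (hf : ∀ x y, x ≤ y → c * (y - x) ≤ f y - f x) : Function.Surjective f := by
  refine hcont.surjective ?_ ?_
  · refine Filter.tendsto_atTop_mono' _ ?_
      (Filter.tendsto_atTop_add_const_right _ (f 0) (Filter.tendsto_id.const_mul_atTop hc))
    filter_upwards [Filter.eventually_ge_atTop 0] with x hx
    rw [id]; linarith [hf 0 x hx]
  · refine Filter.tendsto_atBot_mono' _ ?_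
      (Filter.tendsto_atBot_add_const_right _ (f 0) (Filter.tendsto_id.const_mul_atBot hc))
    filter_upwards [Filter.eventually_le_atBot 0] with x hx
    rw [id]; linarith [hf x 0 hx]

lemma phi'_pos (b : ℝ → ℝ) (x : ℝ) : 0 < phi' b x := Real.exp_pos _

section

variable {b : ℝ → ℝ} (hb : Integrable b)
include hb

lemma continuous_phi' : Continuous (phi' b) :=
  Real.continuous_exp.comp <| continuous_const.mul <|
    continuous_primitive (fun _ _ => hb.intervalIntegrable) 0

lemma phi'_le (x : ℝ) : phi' b x ≤ Real.exp (2 * ∫ z, |b z|) := by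
  refine Real.exp_le_exp.2 ?_
  linarith [neg_abs_le (∫ z in (0:ℝ)..x, b z), abs_intervalIntegral_le_integral_abs hb 0 x]

lemma exp_le_phi' (x : ℝ) : Real.exp (-2 * ∫ z, |b z|) ≤ phi' b x := by
  refine Real.exp_le_exp.2 ?_
  linarith [le_abs_self (∫ z in (0:ℝ)..x, b z), abs_intervalIntegral_le_integral_abs hb 0 x]

lemma lipschitzWith_phi' {C : ℝ≥0} (hC : ∀ x, |b x| ≤ C) :
    LipschitzWith ((Real.exp (2 * ∫ z, |b z|)).toNNReal * (2 * C)) (phi' b) := by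
  have hexponent : LipschitzWith (2 * C) fun x => -2 * ∫ z in (0:ℝ)..x, b z := by
    simpa [Function.comp_def] using (lipschitzWith_smul (-2 : ℝ)).comp
      (lipschitzWith_primitive (fun _ _ => hb.intervalIntegrable) hC 0)
  have hmaps : MapsTo (fun x => -2 * ∫ z in (0:ℝ)..x, b z) univ (Iic (2 * ∫ z, |b z|)) :=
    fun x _ => mem_Iic.2 <| by
      linarith [neg_abs_le (∫ z in (0:ℝ)..x, b z), abs_intervalIntegral_le_integral_abs hb 0 x]
  exact lipschitzOnWith_univ.1 <|
    (Real.lipschitzOnWith_exp_Iic _).comp (lipschitzOnWith_univ.2 hexponent) hmaps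

lemma continuous_phi : Continuous (phi b) :=
  continuous_primitive (fun u v => (continuous_phi' hb).intervalIntegrable u v) 0

lemma mul_sub_le_phi_sub {x y : ℝ} (hxy : x ≤ y) :
    Real.exp (-2 * ∫ z, |b z|) * (y - x) ≤ phi b y - phi b x := by
  have hint : ∀ u v, IntervalIntegrable (phi' b) volume u v :=
    fun u v => (continuous_phi' hb).intervalIntegrable u v
  rw [phi, phi, integral_interval_sub_left (hint 0 y) (hint 0 x), mul_comm, ← smul_eq_mul,
    ← intervalIntegral.integral_const]
  exact integral_mono_on hxy intervalIntegrable_const (hint x y) fun t _ => exp_le_phi' hb t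

lemma lipschitzWith_comp_invFun_phi {g : ℝ → ℝ} {K : ℝ≥0} (hg : LipschitzWith K g) :
    LipschitzWith (K * (Real.exp (-2 * ∫ z, |b z|)).toNNReal⁻¹) (g ∘ Function.invFun (phi b)) := by
  set c := (Real.exp (-2 * ∫ z, |b z|)).toNNReal
  have hc : 0 < c := Real.toNNReal_pos.2 (Real.exp_pos _)
  have hgrowth : ∀ x y, x ≤ y → (c : ℝ) * (y - x) ≤ phi b y - phi b x := fun x y hxy => by
    rw [Real.coe_toNNReal _ (Real.exp_pos _).le]
    exact mul_sub_le_phi_sub hb hxy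
  have hsurj : Function.Surjective (phi b) :=
    surjective_of_mul_sub_le (continuous_phi hb) hc hgrowth
  exact hg.comp ((antilipschitzWith_of_mul_sub_le hc hgrowth).to_rightInverse
    (Function.rightInverse_invFun hsurj))

end

theorem statement3_general (b : ℝ → ℝ)
    (hint : Integrable b (volume : Measure ℝ))
    (hbd : ∃ C : ℝ, ∀ x, |b x| ≤ C)
    (a : ℝ → ℝ) (ha : ContDiff ℝ 2 a)
    (hab : ∃ C : ℝ, ∀ x, |a x| ≤ C)
    (hab' : ∃ C : ℝ, ∀ x, |deriv a x| ≤ C) :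
    (∃ L₁ : NNReal, LipschitzWith L₁ (phi' b ∘ Function.invFun (phi b))) ∧
    (∃ L₂ : NNReal, LipschitzWith L₂ ((fun x => phi' b x * a x) ∘ Function.invFun (phi b))) := by
  obtain ⟨Cb, hCb⟩ := hbd
  obtain ⟨Ca, hCa⟩ := hab
  obtain ⟨Ca', hCa'⟩ := hab'
  have hphi'_lip := lipschitzWith_phi' hint (C := Cb.toNNReal) fun x =>
    (hCb x).trans Cb.le_coe_toNNReal
  have ha_lip : LipschitzWith Ca'.toNNReal a :=
    lipschitzWith_of_nnnorm_deriv_le (ha.differentiable two_ne_zero) fun x => by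
      rw [← NNReal.coe_le_coe, coe_nnnorm]
      exact (hCa' x).trans Ca'.le_coe_toNNReal
  have hphi'_norm : ∀ x, ‖phi' b x‖ ≤ (Real.exp (2 * ∫ z, |b z|)).toNNReal := fun x => by
    rw [Real.norm_of_nonneg (phi'_pos b x).le]
    exact (phi'_le hint x).trans (Real.le_coe_toNNReal _)
  have ha_norm : ∀ x, ‖a x‖ ≤ Ca.toNNReal := fun x => (hCa x).trans Ca.le_coe_toNNReal
  exact ⟨⟨_, lipschitzWith_comp_invFun_phi hint hphi'_lip⟩,
    ⟨_, lipschitzWith_comp_invFun_phi hint (hphi'_lip.mul_of_norm_le ha_lip hphi'_norm ha_norm)⟩⟩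

/-- Let `b` be bounded, measurable, Lebesgue integrable, and let `a`
be bounded and twice continuously differentiable with bounded first and second
derivatives. Then `φ' ∘ φ⁻¹` and `(φ'·a) ∘ φ⁻¹` are globally Lipschitz continuous,
where `φ⁻¹` is the inverse of the bijection `φ`. -/
theorem statement3 (b : ℝ → ℝ) (hmeas : Measurable b)
    (hint : Integrable b (volume : Measure ℝ))
    (hbd : ∃ C : ℝ, ∀ x, |b x| ≤ C)
    (a : ℝ → ℝ) (ha : ContDiff ℝ 2 a)
    (hab : ∃ C : ℝ, ∀ x, |a x| ≤ C)
    (hab' : ∃ C : ℝ, ∀ x, |deriv a x| ≤ C)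
    (hab'' : ∃ C : ℝ, ∀ x, |deriv (deriv a) x| ≤ C) :
    (∃ L₁ : NNReal, LipschitzWith L₁ (phi' b ∘ Function.invFun (phi b))) ∧
    (∃ L₂ : NNReal, LipschitzWith L₂ ((fun x => phi' b x * a x) ∘ Function.invFun (phi b))) :=
  statement3_general b hint hbd a ha hab hab'

end
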